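/- arXiv:2401.00597 — 5 statements merged into one kernel-verified Lean document; each statement's English description precedes it below -/
import Mathlib

section
/- Let K be a field of characteristic 0, R = K[x_1,…,x_n] the polynomial ring, I ⊆ R an ideal and m ⊆ R a maximal ideal. Then the contraction to R of the extension of I to the localization R_m equals the intersection ⋂_{d ≥ 1} (I + m^d). That is, a polynomial f ∈ R lies in I·R_m ∩ R if and only if f ∈ I + m^d for every d ≥ 1. -/
/-!
For `d ≥ 1` the ideal `I + m^d` is either `R` or `m`-primary, so it is contracted from `R_m`;
this gives `I R_m ∩ R ⊆ I + m^d`. Conversely, `R_m` is a Noetherian local ring, so by Krull's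
intersection theorem (applied to the module `R_m / I R_m`) the ideal `I R_m` is the intersection
of the ideals `I R_m + (m R_m)^d`, and `f ∈ I + m^d` puts the image of `f` in each of them.
-/

namespace Ideal

variable {R : Type*} [CommRing R]

theorem iInf_sup_pow_eq_of_le_jacobson [IsNoetherianRing R] {I : Ideal R}
    (hI : I ≤ jacobson ⊥) (J : Ideal R) : ⨅ d : ℕ, J ⊔ I ^ d = J := by
  have hpow (d : ℕ) : J ⊔ I ^ d = (I ^ d • ⊤ : Submodule R (R ⧸ J)).comap J.mkQ := by
    rw [← Submodule.range_mkQ J, ← Submodule.map_top, ← Submodule.map_smul'',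
      Submodule.comap_map_mkQ, smul_eq_mul, mul_top]
  simp_rw [hpow, ← Submodule.comap_iInf, iInf_pow_smul_eq_bot_of_le_jacobson I hI]
  exact J.ker_mkQ

variable {m : Ideal R} [m.IsMaximal]

theorem radical_eq_of_pow_le {Q : Ideal R} {d : ℕ} (hd : d ≠ 0) (hmQ : m ^ d ≤ Q)
    (hQ : Q ≠ ⊤) : Q.radical = m := by
  have : m ≤ Q.radical := by
    simpa [radical_pow _ hd, IsPrime.radical] using radical_mono hmQ
  exact (IsMaximal.eq_of_le ‹_› (radical_eq_top.not.mpr hQ) this).symm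

theorem comap_map_atPrime_of_pow_le {Q : Ideal R} {d : ℕ} (hd : d ≠ 0) (hmQ : m ^ d ≤ Q) :
    (Q.map (algebraMap R (Localization.AtPrime m))).comap (algebraMap R _) = Q := by
  rcases eq_or_ne Q ⊤ with rfl | hQ
  · simp only [map_top, comap_top]
  have hrad := radical_eq_of_pow_le hd hmQ hQ
  refine IsLocalization.under_map_of_isPrimary_disjoint m.primeCompl _
    (isPrimary_of_isMaximal_radical (hrad ▸ ‹_›)) ?_
  exact disjoint_compl_left.mono_right (hrad ▸ le_radical)

theorem comap_map_atPrime_le_sup_pow (I : Ideal R) {d : ℕ} (hd : d ≠ 0) :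
    (I.map (algebraMap R (Localization.AtPrime m))).comap (algebraMap R _) ≤ I ⊔ m ^ d :=
  (comap_mono (map_mono le_sup_left)).trans (comap_map_atPrime_of_pow_le hd le_sup_right).le

theorem map_atPrime_sup_pow (I : Ideal R) (d : ℕ) :
    (I ⊔ m ^ d).map (algebraMap R (Localization.AtPrime m)) =
      I.map (algebraMap R _) ⊔ IsLocalRing.maximalIdeal (Localization.AtPrime m) ^ d := by
  rw [map_sup, Ideal.map_pow, Localization.AtPrime.map_eq_maximalIdeal]

end Ideal

theorem contraction_of_localization_eq_iInter_add_pow_general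
    {K : Type*} [Field K] {n : ℕ}
    (I m : Ideal (MvPolynomial (Fin n) K)) [m.IsMaximal]
    (f : MvPolynomial (Fin n) K) :
    f ∈ Ideal.comap (algebraMap (MvPolynomial (Fin n) K) (Localization.AtPrime m))
        (Ideal.map (algebraMap (MvPolynomial (Fin n) K) (Localization.AtPrime m)) I) ↔
      ∀ d : ℕ, 1 ≤ d → f ∈ I + m ^ d := by
  simp only [Ideal.add_eq_sup]
  refine ⟨fun hf d hd ↦ Ideal.comap_map_atPrime_le_sup_pow I (by omega) hf, fun h ↦ ?_⟩
  rw [Ideal.mem_comap, ← Ideal.iInf_sup_pow_eq_of_le_jacobson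
    (IsLocalRing.maximalIdeal_le_jacobson _) (I.map _), Ideal.mem_iInf]
  rintro (_ | d)
  · simp
  · rw [← Ideal.map_atPrime_sup_pow]
    exact Ideal.mem_map_of_mem _ (h (d + 1) d.succ_pos)

/-- The contraction to `R = K[x_1, …, x_n]` of the extension of an ideal `I` to the
localization `R_m` at a maximal ideal `m` equals `⋂_{d ≥ 1} (I + m^d)`. -/
theorem contraction_of_localization_eq_iInter_add_pow
    {K : Type*} [Field K] [CharZero K] {n : ℕ}
    (I m : Ideal (MvPolynomial (Fin n) K)) [m.IsMaximal]
    (f : MvPolynomial (Fin n) K) :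
    f ∈ Ideal.comap (algebraMap (MvPolynomial (Fin n) K) (Localization.AtPrime m))
        (Ideal.map (algebraMap (MvPolynomial (Fin n) K) (Localization.AtPrime m)) I) ↔
      ∀ d : ℕ, 1 ≤ d → f ∈ I + m ^ d :=
  contraction_of_localization_eq_iInter_add_pow_general I m f
end

section
/- Let K be a field of characteristic 0, R = K[x_1,…,x_n], m ⊆ R a maximal ideal and I ⊆ R an m-primary ideal. Then the local dual space D_m[I] is a finite-dimensional vector space over the residue field R/m. -/
set_option synthInstance.maxHeartbeats 1000000
set_option maxHeartbeats 1000000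

open MvPolynomial

/-- The iterated partial derivative operator `∂^α` on `K[x_1, …, x_n]`. -/
noncomputable def pdOp {K : Type*} [CommRing K] {n : ℕ} (α : Fin n →₀ ℕ) :
    Module.End K (MvPolynomial (Fin n) K) :=
  ((List.finRange n).map fun i =>
    ((pderiv i).toLinearMap : Module.End K (MvPolynomial (Fin n) K)) ^ (α i)).prod

/-- The action on the polynomial `f` of local differential operators at `m`
(finitely supported coefficient functions `c` with values in the residue field `R α m`):
`c ↦ Σ_α c(α) · π(∂^α f)`, as a linear map over `R ⧸ m`. -/
noncomputable def diffApply {K : Type*} [Field K] {n : ℕ}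
    (m : Ideal (MvPolynomial (Fin n) K)) (f : MvPolynomial (Fin n) K) :
    ((Fin n →₀ ℕ) →₀ (MvPolynomial (Fin n) K ⧸ m)) →ₗ[MvPolynomial (Fin n) K ⧸ m]
      (MvPolynomial (Fin n) K ⧸ m) :=
  Finsupp.linearCombination _ fun α => Ideal.Quotient.mk m (pdOp α f)

/-- The local dual space `D_m[I]` of the ideal `I` at the maximal ideal `m`:
all local differential operators at `m` annihilating every element of `I`. -/
noncomputable def dualSpace {K : Type*} [Field K] {n : ℕ}
    (I m : Ideal (MvPolynomial (Fin n) K)) :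
    Submodule (MvPolynomial (Fin n) K ⧸ m) ((Fin n →₀ ℕ) →₀ (MvPolynomial (Fin n) K ⧸ m)) :=
  ⨅ f ∈ I, LinearMap.ker (diffApply m f)

/-!
Pairing operators with polynomials sends `D_m[I]` `R/m`-linearly to `K`-linear functionals
`R → R/m` vanishing on `I`. This map is injective: `∂^α x^γ = 0` unless `α ≤ γ`, while
`∂^γ x^γ = ∏ γᵢ!` is a unit in characteristic 0, so testing an operator `c` against `x^γ` for
`γ` minimal in its support recovers `c(γ)`. Since `rad I = m` is maximal, `R/I` has Krull
dimension 0, hence is Artinian and (Nullstellensatz) finite-dimensional over `K`; so the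
functionals vanishing on `I` form `Hom_K(R/I, R/m)`, which is finite-dimensional over `R/m`.
-/

section pdOp

variable {K : Type*} [CommRing K] {n : ℕ}

lemma pderiv_pow_monomial (i : Fin n) (k : ℕ) (β : Fin n →₀ ℕ) (a : K) :
    (((pderiv i).toLinearMap : Module.End K (MvPolynomial (Fin n) K)) ^ k) (monomial β a)
      = monomial (β - Finsupp.single i k) (a * (β i).descFactorial k) := by
  induction k with
  | zero => simp
  | succ k ih =>
    rw [pow_succ', Module.End.mul_apply, ih, Derivation.coeFn_coe, pderiv_monomial,
      tsub_tsub, ← Finsupp.single_add, Finsupp.tsub_apply, Finsupp.single_eq_same,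
      Nat.descFactorial_succ, Nat.cast_mul, mul_comm ((β i - k : ℕ) : K), mul_assoc]

lemma list_prod_pderiv_pow_monomial (α β : Fin n →₀ ℕ) (a : K) {l : List (Fin n)}
    (hl : l.Nodup) :
    (l.map fun i =>
        ((pderiv i).toLinearMap : Module.End K (MvPolynomial (Fin n) K)) ^ (α i)).prod
        (monomial β a)
      = monomial (β - ∑ i ∈ l.toFinset, Finsupp.single i (α i))
          (a * ∏ i ∈ l.toFinset, ((β i).descFactorial (α i) : K)) := by
  induction l with
  | nil => simp
  | cons i t ih =>
    rw [List.nodup_cons, ← List.mem_toFinset] at hl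
    have hβi : (β - ∑ j ∈ t.toFinset, Finsupp.single j (α j)) i = β i := by
      rw [Finsupp.tsub_apply, Finsupp.finsetSum_apply, Finset.sum_eq_zero, tsub_zero]
      exact fun j hj => Finsupp.single_eq_of_ne (by rintro rfl; exact hl.1 hj)
    rw [List.map_cons, List.prod_cons, Module.End.mul_apply, ih hl.2, pderiv_pow_monomial, hβi,
      List.toFinset_cons, Finset.sum_insert hl.1, Finset.prod_insert hl.1, tsub_tsub, add_comm,
      mul_assoc, mul_comm (∏ j ∈ t.toFinset, _)]

lemma pdOp_monomial (α β : Fin n →₀ ℕ) (a : K) :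
    pdOp α (monomial β a)
      = monomial (β - α) (a * ∏ i, ((β i).descFactorial (α i) : K)) := by
  rw [pdOp, list_prod_pderiv_pow_monomial α β a (List.nodup_finRange n), List.toFinset_finRange,
    Finsupp.univ_sum_single]

lemma pdOp_monomial_self (α : Fin n →₀ ℕ) :
    pdOp α (monomial α (1 : K)) = C (∏ i, ((α i).factorial : K)) := by
  simp [pdOp_monomial, Nat.descFactorial_self]

lemma pdOp_monomial_of_not_le {α β : Fin n →₀ ℕ} (h : ¬ α ≤ β) (a : K) :
    pdOp α (monomial β a) = 0 := by
  obtain ⟨i, hi⟩ : ∃ i, β i < α i := by simpa [Finsupp.le_def] using h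
  rw [pdOp_monomial, Finset.prod_eq_zero (Finset.mem_univ i)
    (by rw [Nat.descFactorial_eq_zero_iff_lt.mpr hi, Nat.cast_zero]), mul_zero, monomial_zero]

end pdOp

section diffMap

variable {K : Type*} [Field K] {n : ℕ} (m : Ideal (MvPolynomial (Fin n) K))

noncomputable def diffMap :
    ((Fin n →₀ ℕ) →₀ (MvPolynomial (Fin n) K ⧸ m)) →ₗ[MvPolynomial (Fin n) K ⧸ m]
      (MvPolynomial (Fin n) K →ₗ[K] (MvPolynomial (Fin n) K ⧸ m)) :=
  Finsupp.linearCombination _ fun α => (Ideal.Quotient.mkₐ K m).toLinearMap ∘ₗ pdOp α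

lemma diffMap_apply (c : (Fin n →₀ ℕ) →₀ (MvPolynomial (Fin n) K ⧸ m))
    (f : MvPolynomial (Fin n) K) : diffMap m c f = diffApply m f c := by
  simp [diffMap, diffApply, Finsupp.linearCombination_apply, Finsupp.sum, LinearMap.sum_apply]

lemma diffMap_monomial_of_minimal {c : (Fin n →₀ ℕ) →₀ (MvPolynomial (Fin n) K ⧸ m)}
    {γ : Fin n →₀ ℕ} (hγ : Minimal (· ∈ c.support) γ) :
    diffMap m c (monomial γ 1)
      = c γ * Ideal.Quotient.mk m (C (∏ i, ((γ i).factorial : K))) := by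
  rw [diffMap, Finsupp.linearCombination_apply, Finsupp.sum, LinearMap.sum_apply,
    Finset.sum_eq_single_of_mem γ hγ.prop]
  · simp [pdOp_monomial_self]
  · intro α hα hne
    have hle : ¬ α ≤ γ := fun hle => hne (le_antisymm hle (hγ.2 hα hle))
    simp [pdOp_monomial_of_not_le hle]

theorem diffMap_injective [CharZero K] : Function.Injective (diffMap m) := by
  rw [← LinearMap.ker_eq_bot, LinearMap.ker_eq_bot']
  intro c hc
  by_contra hne
  obtain ⟨γ, hγ⟩ := Finset.exists_minimal (Finsupp.support_nonempty_iff.mpr hne)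
  have hunit : IsUnit (Ideal.Quotient.mk m (C (∏ i, ((γ i).factorial : K)))) :=
    (IsUnit.mk0 _ (by simp [Finset.prod_ne_zero_iff, Nat.factorial_ne_zero])).map
      ((Ideal.Quotient.mk m).comp C)
  have hγ0 : c γ = 0 := by
    rw [← hunit.mul_left_eq_zero, ← diffMap_monomial_of_minimal m hγ, hc, LinearMap.zero_apply]
  exact Finsupp.mem_support_iff.mp hγ.prop hγ0

end diffMap

theorem Ideal.finite_quotient_of_isMaximal_radical {R A : Type*} [CommRing R] [IsArtinianRing R]
    [CommRing A] [Algebra R A] [Algebra.FiniteType R A] {I : Ideal A} (hI : I.radical.IsMaximal) :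
    Module.Finite R (A ⧸ I) := by
  rw [Module.finite_iff_krullDimLE_zero,
    Ideal.krullDimLE_zero_quotient_iff_forall_minimalPrimes_isMaximal]
  intro J hJ
  have hle : I.radical ≤ J := (hJ.1.1.radical_le_iff).mpr hJ.1.2
  rwa [← hI.eq_of_le hJ.1.1.ne_top hle]

section dualSpace

variable {K : Type*} [Field K] {n : ℕ} {I m : Ideal (MvPolynomial (Fin n) K)}

@[simp]
lemma mem_dualSpace {c : (Fin n →₀ ℕ) →₀ (MvPolynomial (Fin n) K ⧸ m)} :
    c ∈ dualSpace I m ↔ ∀ f ∈ I, diffApply m f c = 0 := by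
  simp [dualSpace]

lemma diffMap_mem_range_lcomp_mkQ {c : (Fin n →₀ ℕ) →₀ (MvPolynomial (Fin n) K ⧸ m)}
    (hc : c ∈ dualSpace I m) :
    diffMap m c ∈ LinearMap.range
      (LinearMap.lcomp (MvPolynomial (Fin n) K ⧸ m) (MvPolynomial (Fin n) K ⧸ m)
        (I.restrictScalars K).mkQ) := by
  have hker : I.restrictScalars K ≤ LinearMap.ker (diffMap m c) := fun f hf => by
    rw [LinearMap.mem_ker, diffMap_apply]
    exact mem_dualSpace.mp hc f hf
  exact ⟨(I.restrictScalars K).liftQ (diffMap m c) hker, (I.restrictScalars K).liftQ_mkQ _ hker⟩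

end dualSpace

theorem dualSpace_finiteDimensional_of_isPrimary_general
    {K : Type*} [Field K] [CharZero K] {n : ℕ}
    (I m : Ideal (MvPolynomial (Fin n) K)) [m.IsMaximal]
    (hrad : I.radical = m) :
    Module.Finite (MvPolynomial (Fin n) K ⧸ m) (dualSpace I m) := by
  have : Module.Finite K (MvPolynomial (Fin n) K ⧸ I) :=
    Ideal.finite_quotient_of_isMaximal_radical (hrad ▸ ‹m.IsMaximal›)
  have : Module.Finite K (MvPolynomial (Fin n) K ⧸ I.restrictScalars K) :=
    .equiv (Submodule.Quotient.restrictScalarsEquiv K I).symm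
  let toHom : dualSpace I m →ₗ[MvPolynomial (Fin n) K ⧸ m] LinearMap.range
      (LinearMap.lcomp (MvPolynomial (Fin n) K ⧸ m) (MvPolynomial (Fin n) K ⧸ m)
        (I.restrictScalars K).mkQ) :=
    ((diffMap m).domRestrict _).codRestrict _ fun c => diffMap_mem_range_lcomp_mkQ c.2
  exact .of_injective toHom fun c d h => Subtype.ext (diffMap_injective m (congrArg Subtype.val h))

/-- If `I` is `m`-primary then the local dual space `D_m[I]` is a finite-dimensional
vector space over the residue field `R ⧸ m` (which is a field since `m` is maximal;
`Module.Finite` over a field is finite-dimensionality). -/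
theorem dualSpace_finiteDimensional_of_isPrimary
    {K : Type*} [Field K] [CharZero K] {n : ℕ}
    (I m : Ideal (MvPolynomial (Fin n) K)) [m.IsMaximal]
    (hprim : I.IsPrimary) (hrad : I.radical = m) :
    Module.Finite (MvPolynomial (Fin n) K ⧸ m) (dualSpace I m) :=
  dualSpace_finiteDimensional_of_isPrimary_general I m hrad
end

section
/- Let K be a field of characteristic 0, R = K[x_1,…,x_n], m ⊆ R a maximal ideal and I ⊆ R an ideal. Then D_m[I : m^∞] is an (R/m)-subspace of D_m[I], and the quotient (R/m)-vector space E_m[I] := D_m[I] / D_m[I : m^∞] is finite-dimensional over R/m. -/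
/-!
As `R` is Noetherian, `I : m^∞ = I : m^N` for some `N`, and this ideal is finitely generated.
By the Nullstellensatz `R/m`, hence also `R/m^N`, is finite-dimensional over `K`; as
`m^N (I : m^N) ⊆ I`, there is a finite set `F` with `I : m^∞ ⊆ I + span_K F`. An operator in
`D_m[I]` killing `F` therefore lies in `D_m[I : m^∞]`, so `E_m[I]` is a quotient of the image of
`c ↦ (c · f)_{f ∈ F}`, a subspace of `(R/m)^F`.
-/

set_option synthInstance.maxHeartbeats 1000000
set_option maxHeartbeats 1000000

open MvPolynomial

/-- The quotient of a submodule `p` by a submodule `q` of `p`. -/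
abbrev Submodule.subQuot {R M : Type*} [Ring R] [AddCommGroup M] [Module R M]
    (p : Submodule R M) (q : Submodule R ↥p) : Type _ := ↥p ⧸ q

open Pointwise

open Submodule in
theorem Submodule.exists_finset_sup_span_eq_top {R M : Type*} [Ring R] [AddCommGroup M]
    [Module R M] (p : Submodule R M) [Module.Finite R (M ⧸ p)] :
    ∃ B : Finset M, p ⊔ span R B = ⊤ := by
  classical
  obtain ⟨s, hs⟩ := Module.Finite.fg_top (R := R) (M := M ⧸ p)
  obtain ⟨lift, hlift⟩ := p.mkQ_surjective.hasRightInverse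
  refine ⟨s.image lift, ?_⟩
  rw [← comap_map_mkQ, map_span, Finset.coe_image, Set.image_image]
  simp only [hlift _, Set.image_id', hs, comap_top]

theorem Ideal.restrictScalars_span_le_sup_span_mul {K A : Type*} [CommSemiring K] [CommRing A]
    [Algebra K A] {I J : Ideal A} {B G : Finset A}
    (hJB : J.restrictScalars K ⊔ Submodule.span K B = ⊤) (hJG : J * Ideal.span G ≤ I) :
    (Ideal.span (G : Set A)).restrictScalars K ≤
      I.restrictScalars K ⊔ Submodule.span K (B * G : Set A) := by
  intro x hx
  obtain ⟨h, -, rfl⟩ := Submodule.mem_span_finset.mp hx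
  refine Submodule.sum_mem _ fun g hg => ?_
  obtain ⟨j, hj, b, hb, hjb⟩ := Submodule.mem_sup.mp (hJB ▸ Submodule.mem_top : h g ∈ _)
  rw [← hjb, add_smul]
  refine Submodule.add_mem_sup (hJG (Ideal.mul_mem_mul hj (Ideal.subset_span hg))) ?_
  rw [← Submodule.span_mul_span]
  exact Submodule.mul_mem_mul hb (Submodule.subset_span hg)

theorem Module.Finite.quotient_pow {K A : Type*} [CommRing K] [CommRing A] [Algebra K A]
    {m : Ideal A} (hm : m.FG) [Module.Finite K (A ⧸ m)] (N : ℕ) :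
    Module.Finite K (A ⧸ m ^ N) := by
  rcases N.eq_zero_or_pos with rfl | hN
  · rw [pow_zero, Ideal.one_eq_top]
    infer_instance
  have hle : m ^ N ≤ m := Ideal.pow_le_self hN.ne'
  have hker : RingHom.ker (Ideal.Quotient.factorₐ K hle) = m.map (Ideal.Quotient.mk (m ^ N)) :=
    Ideal.Quotient.factor_ker hle
  refine Module.finite_of_surjective_of_ker_le_nilradical (Ideal.Quotient.factorₐ K hle)
    (Ideal.Quotient.factor_surjective hle) ?_ (hker ▸ hm.map _)
  rw [hker, Ideal.map_le_iff_le_comap]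
  exact fun x hx => mem_nilradical.mpr
    ⟨N, by rw [← map_pow, Ideal.Quotient.eq_zero_iff_mem]; exact Ideal.pow_mem_pow hx N⟩

theorem Ideal.exists_iSup_colon_pow_eq {A : Type*} [CommRing A] [IsNoetherianRing A]
    (I m : Ideal A) :
    ∃ N : ℕ, ⨆ d : ℕ, I.colon ((m ^ d : Ideal A) : Set A) = I.colon (m ^ N : Ideal A) :=
  ⟨_, WellFoundedGT.iSup_eq_monotonicSequenceLimit
    ⟨fun d => I.colon ((m ^ d : Ideal A) : Set A),
      fun _ _ h => Submodule.colon_mono le_rfl (Ideal.pow_le_pow_right h)⟩⟩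

theorem Ideal.exists_finset_restrictScalars_colon_le {K A : Type*} [CommRing K] [CommRing A]
    [IsNoetherianRing A] [Algebra K A] (I J : Ideal A) [Module.Finite K (A ⧸ J)] :
    ∃ F : Finset A, (I.colon (J : Set A)).restrictScalars K ≤
      I.restrictScalars K ⊔ Submodule.span K (F : Set A) := by
  classical
  have : Module.Finite K (A ⧸ J.restrictScalars K) :=
    Module.Finite.equiv (Submodule.Quotient.restrictScalarsEquiv K J).symm
  obtain ⟨B, hB⟩ := (J.restrictScalars K).exists_finset_sup_span_eq_top
  obtain ⟨G, hG⟩ := IsNoetherian.noetherian (I.colon (J : Set A))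
  refine ⟨B * G, ?_⟩
  rw [← hG, Finset.coe_mul]
  refine Ideal.restrictScalars_span_le_sup_span_mul hB (Ideal.mul_le.mpr fun x hx y hy => ?_)
  have hy : y ∈ I.colon (J : Set A) := hG ▸ hy
  simpa [mul_comm] using Submodule.mem_colon.mp hy x hx

section DualSpace

variable {K : Type*} [Field K] {n : ℕ}

theorem mem_dualSpace_iff {I m : Ideal (MvPolynomial (Fin n) K)}
    {c : (Fin n →₀ ℕ) →₀ (MvPolynomial (Fin n) K ⧸ m)} :
    c ∈ dualSpace I m ↔ ∀ f ∈ I, diffApply m f c = 0 := by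
  simp [dualSpace, Submodule.mem_iInf, LinearMap.mem_ker]

theorem dualSpace_antitone (m : Ideal (MvPolynomial (Fin n) K)) :
    Antitone fun I => dualSpace I m :=
  fun _ _ hIJ _ hc => mem_dualSpace_iff.mpr fun f hf => mem_dualSpace_iff.mp hc f (hIJ hf)

noncomputable def diffApplyFlip (m : Ideal (MvPolynomial (Fin n) K))
    (c : (Fin n →₀ ℕ) →₀ (MvPolynomial (Fin n) K ⧸ m)) :
    MvPolynomial (Fin n) K →ₗ[K] MvPolynomial (Fin n) K ⧸ m where
  toFun f := diffApply m f c
  map_add' g h := by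
    simp [diffApply, Finsupp.linearCombination_apply, Finsupp.sum, mul_add, Finset.sum_add_distrib]
  map_smul' k g := by
    simp only [diffApply, Finsupp.linearCombination_apply, Finsupp.sum, map_smul, RingHom.id_apply,
      Finset.smul_sum, ← Ideal.Quotient.mkₐ_eq_mk K, smul_comm k]

theorem mem_dualSpace_iff_le_ker {I m : Ideal (MvPolynomial (Fin n) K)}
    {c : (Fin n →₀ ℕ) →₀ (MvPolynomial (Fin n) K ⧸ m)} :
    c ∈ dualSpace I m ↔ I.restrictScalars K ≤ LinearMap.ker (diffApplyFlip m c) :=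
  mem_dualSpace_iff

theorem mem_dualSpace_of_le_sup_span {I J m : Ideal (MvPolynomial (Fin n) K)}
    {F : Set (MvPolynomial (Fin n) K)}
    (hJ : J.restrictScalars K ≤ I.restrictScalars K ⊔ Submodule.span K F)
    {c : (Fin n →₀ ℕ) →₀ (MvPolynomial (Fin n) K ⧸ m)} (hc : c ∈ dualSpace I m)
    (hF : ∀ f ∈ F, diffApply m f c = 0) : c ∈ dualSpace J m := by
  rw [mem_dualSpace_iff_le_ker] at hc ⊢
  exact hJ.trans (sup_le hc (Submodule.span_le.mpr hF))

noncomputable def dualEval (I m : Ideal (MvPolynomial (Fin n) K))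
    (F : Set (MvPolynomial (Fin n) K)) :
    dualSpace I m →ₗ[MvPolynomial (Fin n) K ⧸ m] (F → MvPolynomial (Fin n) K ⧸ m) :=
  (LinearMap.pi fun f : F => diffApply m f) ∘ₗ (dualSpace I m).subtype

theorem finite_subQuot_dualSpace_of_le_sup_span {I J m : Ideal (MvPolynomial (Fin n) K)}
    {F : Finset (MvPolynomial (Fin n) K)}
    (hJ : J.restrictScalars K ≤ I.restrictScalars K ⊔ Submodule.span K (F : Set _)) :
    Module.Finite (MvPolynomial (Fin n) K ⧸ m)
      ((dualSpace I m).subQuot (Submodule.comap (dualSpace I m).subtype (dualSpace J m))) := by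
  have hle : LinearMap.ker (dualEval I m F) ≤
      Submodule.comap (dualSpace I m).subtype (dualSpace J m) :=
    fun c hc => mem_dualSpace_of_le_sup_span hJ c.2 fun f hf => congr_fun hc ⟨f, hf⟩
  have : Module.Finite (MvPolynomial (Fin n) K ⧸ m)
      ((dualSpace I m).subQuot (LinearMap.ker (dualEval I m F))) :=
    Module.Finite.of_injective (Submodule.liftQ _ (dualEval I m F) le_rfl)
      (LinearMap.ker_eq_bot.mp (Submodule.ker_liftQ_eq_bot _ _ _ le_rfl))
  exact Module.Finite.of_surjective (Submodule.factor hle) (Submodule.factor_surjective hle)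

end DualSpace

theorem excess_dual_space_finiteDimensional_general
    {K : Type*} [Field K] {n : ℕ}
    (I m : Ideal (MvPolynomial (Fin n) K)) [m.IsMaximal] :
    dualSpace (⨆ d : ℕ, Submodule.colon I ((m ^ d : Ideal (MvPolynomial (Fin n) K)) : Set (MvPolynomial (Fin n) K))) m ≤ dualSpace I m ∧
      Module.Finite (MvPolynomial (Fin n) K ⧸ m)
        ((dualSpace I m).subQuot
          (Submodule.comap (dualSpace I m).subtype
            (dualSpace (⨆ d : ℕ, Submodule.colon I ((m ^ d : Ideal (MvPolynomial (Fin n) K)) : Set (MvPolynomial (Fin n) K))) m))) := by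
  obtain ⟨N, hN⟩ := Ideal.exists_iSup_colon_pow_eq I m
  let := Ideal.Quotient.field m
  have : Module.Finite K (MvPolynomial (Fin n) K ⧸ m) :=
    finite_of_finite_type_of_isJacobsonRing K _
  have := Module.Finite.quotient_pow (K := K) (IsNoetherian.noetherian m) N
  obtain ⟨F, hF⟩ := Ideal.exists_finset_restrictScalars_colon_le (K := K) I (m ^ N)
  rw [hN]
  exact ⟨dualSpace_antitone m Ideal.le_colon, finite_subQuot_dualSpace_of_le_sup_span hF⟩

/-- `D_m[I : m^∞]` is contained in `D_m[I]`, and the excess dual space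
`E_m[I] = D_m[I] / D_m[I : m^∞]` is a finite-dimensional vector space over the residue
field `R ⧸ m` (a field since `m` is maximal; `Module.Finite` over a field is
finite-dimensionality). Here the saturation `I : m^∞` is `⨆ d, (I : m^d)`. -/
theorem excess_dual_space_finiteDimensional
    {K : Type*} [Field K] [CharZero K] {n : ℕ}
    (I m : Ideal (MvPolynomial (Fin n) K)) [m.IsMaximal] :
    dualSpace (⨆ d : ℕ, Submodule.colon I ((m ^ d : Ideal (MvPolynomial (Fin n) K)) : Set (MvPolynomial (Fin n) K))) m ≤ dualSpace I m ∧
      Module.Finite (MvPolynomial (Fin n) K ⧸ m)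
        ((dualSpace I m).subQuot
          (Submodule.comap (dualSpace I m).subtype
            (dualSpace (⨆ d : ℕ, Submodule.colon I ((m ^ d : Ideal (MvPolynomial (Fin n) K)) : Set (MvPolynomial (Fin n) K))) m))) :=
  excess_dual_space_finiteDimensional_general I m
end

section
/- Let R be a commutative Noetherian ring (e.g. a polynomial ring over a field of characteristic 0) and I ⊊ R a proper ideal. Then I admits an irredundant primary decomposition I = Q_1 ∩ … ∩ Q_r with the following minimality property: for every other irredundant primary decomposition I = Q'_1 ∩ … ∩ Q'_r with √(Q_i) = √(Q'_i) for i = 1,…,r, one has for all i that nil(Q_i) ≤ nil(Q'_i), and whenever nil(Q_i) = nil(Q'_i) one has Q_i ⊆ Q'_i. Moreover, a decomposition with this property is unique. -/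
set_option synthInstance.maxHeartbeats 1000000
set_option maxHeartbeats 1000000

/-- `nil(Q)`: the least positive integer `k` with `(√Q)^k ⊆ Q`. -/
noncomputable def nilIndex {R : Type*} [CommRing R] (Q : Ideal R) : ℕ :=
  sInf {k : ℕ | 0 < k ∧ Q.radical ^ k ≤ Q}

/-- `I = Q_1 ∩ … ∩ Q_r` is an irredundant primary decomposition: each `Q_i` is primary,
the radicals are pairwise distinct, and no `Q_i` contains the intersection of the
others. -/
def IsIrredundantPrimaryDecomposition {R : Type*} [CommRing R]
    (I : Ideal R) {r : ℕ} (Q : Fin r → Ideal R) : Prop :=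
  (∀ i, (Q i).IsPrimary) ∧ I = ⨅ i, Q i ∧
    (∀ i j, (Q i).radical = (Q j).radical → i = j) ∧
    ∀ i : Fin r, ¬ (⨅ j ∈ ({i}ᶜ : Set (Fin r)), Q j) ≤ Q i

/-- The minimality property of a primary decomposition `Q` of `I`, among all irredundant
primary decompositions `Q'` with matching radicals: componentwise, `nil(Q_i) ≤ nil(Q'_i)`,
and if `nil(Q_i) = nil(Q'_i)` then `Q_i ⊆ Q'_i`. -/
def IsMinimalPrimaryDecomposition {R : Type*} [CommRing R]
    (I : Ideal R) {r : ℕ} (Q : Fin r → Ideal R) : Prop :=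
  IsIrredundantPrimaryDecomposition I Q ∧
    ∀ Q' : Fin r → Ideal R, IsIrredundantPrimaryDecomposition I Q' →
      (∀ i, (Q i).radical = (Q' i).radical) →
      ∀ i, nilIndex (Q i) ≤ nilIndex (Q' i) ∧
        (nilIndex (Q i) = nilIndex (Q' i) → Q i ≤ Q' i)

/-!
Let `P₁, …, P_r` be the associated primes of `I`. For each `i` let `mᵢ` be the least value of
`nil(Dᵢ)` over all primary decompositions `D` of `I` with radicals `P₁, …, P_r`, and let `Qᵢ` be the
saturation of `I + Pᵢ^mᵢ` at `Pᵢ`, the smallest `Pᵢ`-primary ideal containing `I + Pᵢ^mᵢ`.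
Replacing the `i`-th component of a decomposition that realises `mᵢ` by `Qᵢ` gives again a
decomposition, and by Yao's compatibility theorem components taken from different decompositions
still intersect to `I`; so `Q` is a decomposition with `nil(Qᵢ) = mᵢ`, and every admissible
`Q'ᵢ` with `nil(Q'ᵢ) = mᵢ` contains `I + Pᵢ^mᵢ`, hence `Qᵢ`. Irredundancy holds because every
associated prime is the radical of a component of every primary decomposition, and uniqueness
is antisymmetry.
-/

open Finset

namespace Ideal

variable {R : Type*} [CommRing R]

def saturation (J : Ideal R) (S : Submonoid R) : Ideal R where
  carrier := {x | ∃ s ∈ S, s * x ∈ J}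
  zero_mem' := ⟨1, S.one_mem, by simp⟩
  add_mem' := by
    rintro x y ⟨s, hs, hsx⟩ ⟨t, ht, hty⟩
    refine ⟨s * t, S.mul_mem hs ht, ?_⟩
    rw [mul_add, mul_right_comm, mul_assoc s t]
    exact add_mem (J.mul_mem_right t hsx) (J.mul_mem_left s hty)
  smul_mem' := by
    rintro c x ⟨s, hs, hsx⟩
    exact ⟨s, hs, by rw [smul_eq_mul, mul_left_comm]; exact J.mul_mem_left c hsx⟩

variable {J p q : Ideal R} {S : Submonoid R}

theorem mem_saturation {x : R} : x ∈ J.saturation S ↔ ∃ s ∈ S, s * x ∈ J := Iff.rfl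

theorem le_saturation : J ≤ J.saturation S :=
  fun _ hx => ⟨1, S.one_mem, by rwa [one_mul]⟩

theorem saturation_le_of_isPrimary (hq : q.IsPrimary) (hJq : J ≤ q)
    (hS : ∀ s ∈ S, s ∉ q.radical) : J.saturation S ≤ q := by
  rintro x ⟨s, hs, hsx⟩
  exact ((isPrimary_iff.mp hq).2 (mul_comm s x ▸ hJq hsx)).resolve_right (hS s hs)

theorem IsPrimary.colon_eq_self (hq : q.IsPrimary) (hJ : ¬ J ≤ q.radical) :
    q.colon (J : Set R) = q := by
  obtain ⟨a, haJ, haq⟩ := SetLike.not_le_iff_exists.mp hJ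
  refine le_antisymm (fun x hx => ?_) le_colon
  have hxa : x * a ∈ q := by simpa [smul_eq_mul] using Submodule.mem_colon.mp hx a haJ
  exact ((isPrimary_iff.mp hq).2 hxa).resolve_right haq

variable [hp : p.IsPrime]

theorem saturation_primeCompl_le_of_isPrimary (hq : q.IsPrimary) (hJq : J ≤ q)
    (hqp : q.radical = p) : J.saturation p.primeCompl ≤ q :=
  saturation_le_of_isPrimary hq hJq fun _ hs => hqp ▸ hs

theorem radical_saturation_primeCompl (hJ : J.radical = p) :
    (J.saturation p.primeCompl).radical = p := by
  have hsat : J.saturation p.primeCompl ≤ p :=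
    saturation_primeCompl_le_of_isPrimary hp.isPrimary (hJ ▸ le_radical) hp.radical
  refine le_antisymm ?_ ?_
  · simpa only [hp.radical] using radical_mono hsat
  · simpa only [hJ] using radical_mono (le_saturation (J := J) (S := p.primeCompl))

theorem isPrimary_saturation_primeCompl (hJ : J.radical = p) :
    (J.saturation p.primeCompl).IsPrimary := by
  rw [isPrimary_iff, radical_saturation_primeCompl hJ]
  refine ⟨fun htop => ?_, fun {x y} hxy => ?_⟩
  · obtain ⟨s, hs, hs1⟩ := mem_saturation.mp (htop ▸ Submodule.mem_top : (1 : R) ∈ _)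
    exact hs (hJ ▸ le_radical (by rwa [mul_one] at hs1))
  · by_cases hy : y ∈ p
    · exact Or.inr hy
    · obtain ⟨s, hs, hsxy⟩ := mem_saturation.mp hxy
      exact Or.inl ⟨s * y, p.primeCompl.mul_mem hs hy, by rwa [mul_right_comm, mul_assoc]⟩

theorem radical_sup_pow_eq (hJp : J ≤ p) {n : ℕ} (hn : n ≠ 0) : (J ⊔ p ^ n).radical = p := by
  refine le_antisymm ?_ ?_
  · simpa only [hp.radical] using radical_mono (sup_le hJp (pow_le_self hn))
  · calc p = (p ^ n).radical := by rw [Ideal.radical_pow p hn, hp.radical]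
      _ ≤ (J ⊔ p ^ n).radical := radical_mono le_sup_right

end Ideal

section NilIndex

variable {R : Type*} [CommRing R] {q : Ideal R}

theorem nilIndex_le {k : ℕ} (hk : 0 < k) (h : q.radical ^ k ≤ q) : nilIndex q ≤ k :=
  Nat.sInf_le ⟨hk, h⟩

theorem nilIndex_spec [IsNoetherianRing R] (q : Ideal R) :
    0 < nilIndex q ∧ q.radical ^ nilIndex q ≤ q := by
  obtain ⟨k, hk⟩ := q.exists_radical_pow_le_of_fg (IsNoetherian.noetherian _)
  exact Nat.sInf_mem (s := {k | 0 < k ∧ q.radical ^ k ≤ q})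
    ⟨k + 1, k.succ_pos, (Ideal.pow_le_pow_right k.le_succ).trans hk⟩

end NilIndex

theorem Finset.inf_eq_inf_inf_erase {ι α : Type*} [DecidableEq ι] [SemilatticeInf α] [OrderTop α]
    {s : Finset ι} {m : ι} (f : ι → α) (hm : m ∈ s) : s.inf f = f m ⊓ (s.erase m).inf f := by
  rw [← Finset.inf_insert, Finset.insert_erase hm]

section PrimaryDecomposition

variable {R ι : Type*} [CommRing R]

structure IsPrimaryDecompositionWithRadicals (I : Ideal R) (P : ι → Ideal R) (s : Finset ι)
    (D : ι → Ideal R) : Prop where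
  isPrimary : ∀ i ∈ s, (D i).IsPrimary
  radical_eq : ∀ i ∈ s, (D i).radical = P i
  inf_eq : s.inf D = I

namespace IsPrimaryDecompositionWithRadicals

variable {I : Ideal R} {P D D' : ι → Ideal R} {s : Finset ι} {i m : ι}

theorem le_of_mem (hD : IsPrimaryDecompositionWithRadicals I P s D) (hi : i ∈ s) : I ≤ D i :=
  hD.inf_eq ▸ Finset.inf_le hi

theorem isPrime (hD : IsPrimaryDecompositionWithRadicals I P s D) (hi : i ∈ s) : (P i).IsPrime :=
  hD.radical_eq i hi ▸ Ideal.isPrime_radical (hD.isPrimary i hi)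

theorem pow_nilIndex_le [IsNoetherianRing R] (hD : IsPrimaryDecompositionWithRadicals I P s D)
    (hi : i ∈ s) : P i ^ nilIndex (D i) ≤ D i :=
  hD.radical_eq i hi ▸ (nilIndex_spec (D i)).2

theorem erase [DecidableEq ι] (hD : IsPrimaryDecompositionWithRadicals I P s D) (m : ι) :
    IsPrimaryDecompositionWithRadicals ((s.erase m).inf D) P (s.erase m) D :=
  ⟨fun i hi => hD.isPrimary i (mem_of_mem_erase hi),
    fun i hi => hD.radical_eq i (mem_of_mem_erase hi), rfl⟩

theorem update [DecidableEq ι] (hD : IsPrimaryDecompositionWithRadicals I P s D) {q : Ideal R}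
    (hq : q.IsPrimary) (hqP : q.radical = P i) (hIq : I ≤ q) (hqD : q ≤ D i) :
    IsPrimaryDecompositionWithRadicals I P s (Function.update D i q) where
  isPrimary j hj := by
    rcases eq_or_ne j i with rfl | hji
    · rwa [Function.update_self]
    · rw [Function.update_of_ne hji]; exact hD.isPrimary j hj
  radical_eq j hj := by
    rcases eq_or_ne j i with rfl | hji
    · rwa [Function.update_self]
    · rw [Function.update_of_ne hji]; exact hD.radical_eq j hj
  inf_eq := by
    refine le_antisymm ?_ (Finset.le_inf fun j hj => ?_)
    · refine hD.inf_eq ▸ Finset.inf_mono_fun fun j _ => ?_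
      rcases eq_or_ne j i with rfl | hji
      · rwa [Function.update_self]
      · rw [Function.update_of_ne hji]
    · rcases eq_or_ne j i with rfl | hji
      · rwa [Function.update_self]
      · rw [Function.update_of_ne hji]; exact hD.le_of_mem hj

theorem colon_pow_eq_inf_erase [DecidableEq ι] (hD : IsPrimaryDecompositionWithRadicals I P s D)
    (hm : m ∈ s) (hmax : ∀ j ∈ s, j ≠ m → ¬ P m ≤ P j) {n : ℕ} (hn : P m ^ n ≤ D m) :
    I.colon ((P m ^ n : Ideal R) : Set R) = (s.erase m).inf D := by
  have hcolon : ∀ j ∈ s.erase m, (D j).colon ((P m ^ n : Ideal R) : Set R) = D j := by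
    intro j hj
    obtain ⟨hjm, hjs⟩ := mem_erase.mp hj
    have := hD.isPrime hjs
    refine (hD.isPrimary j hjs).colon_eq_self fun hle => hmax j hjs hjm ?_
    exact Ideal.IsPrime.le_of_pow_le (hD.radical_eq j hjs ▸ hle)
  rw [← hD.inf_eq, Submodule.colon_finsetInf, Finset.inf_eq_inf_inf_erase _ hm,
    (Submodule.colon_eq_top_iff_subset _).mpr hn, top_inf_eq]
  exact Finset.inf_congr rfl hcolon

theorem inf_erase_eq [DecidableEq ι] [IsNoetherianRing R]
    (hD : IsPrimaryDecompositionWithRadicals I P s D)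
    (hD' : IsPrimaryDecompositionWithRadicals I P s D') (hm : m ∈ s)
    (hmax : ∀ j ∈ s, j ≠ m → ¬ P m ≤ P j) : (s.erase m).inf D = (s.erase m).inf D' := by
  have hn : P m ^ (nilIndex (D m) + nilIndex (D' m)) ≤ D m :=
    (Ideal.pow_le_pow_right (Nat.le_add_right _ _)).trans (hD.pow_nilIndex_le hm)
  have hn' : P m ^ (nilIndex (D m) + nilIndex (D' m)) ≤ D' m :=
    (Ideal.pow_le_pow_right (Nat.le_add_left _ _)).trans (hD'.pow_nilIndex_le hm)
  rw [← hD.colon_pow_eq_inf_erase hm hmax hn, ← hD'.colon_pow_eq_inf_erase hm hmax hn']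

/-- Yao's compatibility theorem. If `P m` is maximal among the radicals, then for large `n` the
colon ideal `I : P m ^ n` is the intersection of the other components of any decomposition, so
that intersection does not depend on the decomposition and induction on `s` applies. -/
theorem inf_eq_of_forall_exists_component [DecidableEq ι] [IsNoetherianRing R] (hP : P.Injective)
    {Q : ι → Ideal R} (hex : ∃ D, IsPrimaryDecompositionWithRadicals I P s D)
    (hQ : ∀ i ∈ s, ∃ D, IsPrimaryDecompositionWithRadicals I P s D ∧ D i = Q i) :
    s.inf Q = I := by
  induction s using Finset.strongInduction generalizing I with
  | H s ih =>
  obtain ⟨D₀, hD₀⟩ := hex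
  rcases s.eq_empty_or_nonempty with rfl | hs
  · exact hD₀.inf_eq
  obtain ⟨m, hm, hmax⟩ := s.exists_maximalFor P hs
  have hmax' : ∀ j ∈ s, j ≠ m → ¬ P m ≤ P j :=
    fun j hj hjm hle => hjm (hP (le_antisymm (hmax hj hle) hle))
  have hrest : (s.erase m).inf Q = (s.erase m).inf D₀ := by
    refine ih _ (erase_ssubset hm) ⟨D₀, hD₀.erase m⟩ fun i hi => ?_
    obtain ⟨D, hD, hDi⟩ := hQ i (mem_of_mem_erase hi)
    exact ⟨D, hD.inf_erase_eq hD₀ hm hmax' ▸ hD.erase m, hDi⟩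
  obtain ⟨Dm, hDm, hDmm⟩ := hQ m hm
  rw [Finset.inf_eq_inf_inf_erase _ hm, hrest, ← hDmm, hD₀.inf_erase_eq hDm hm hmax',
    ← Finset.inf_eq_inf_inf_erase _ hm, hDm.inf_eq]

variable [IsNoetherianRing R] [Fintype ι] [DecidableEq ι]

theorem exists_forall_nilIndex_le (hP : P.Injective)
    (hex : ∃ D, IsPrimaryDecompositionWithRadicals I P univ D) :
    ∃ Q, IsPrimaryDecompositionWithRadicals I P univ Q ∧
      ∀ D, IsPrimaryDecompositionWithRadicals I P univ D → ∀ i,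
        nilIndex (Q i) ≤ nilIndex (D i) ∧ (nilIndex (Q i) = nilIndex (D i) → Q i ≤ D i) := by
  obtain ⟨D₀, hD₀⟩ := hex
  have hPprime (i : ι) : (P i).IsPrime := hD₀.isPrime (mem_univ i)
  let nils (i : ι) : Set ℕ :=
    {k | ∃ D, IsPrimaryDecompositionWithRadicals I P univ D ∧ nilIndex (D i) = k}
  let m (i : ι) : ℕ := sInf (nils i)
  have hm_le {D} (hD : IsPrimaryDecompositionWithRadicals I P univ D) (i : ι) :
      m i ≤ nilIndex (D i) :=
    Nat.sInf_le ⟨D, hD, rfl⟩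
  have hm_mem (i : ι) : ∃ D, IsPrimaryDecompositionWithRadicals I P univ D ∧
      nilIndex (D i) = m i :=
    Nat.sInf_mem (s := nils i) ⟨_, D₀, hD₀, rfl⟩
  have hm_pos (i : ι) : 0 < m i := by
    obtain ⟨D, -, hDi⟩ := hm_mem i
    exact hDi ▸ (nilIndex_spec (D i)).1
  let Q (i : ι) : Ideal R := (I ⊔ P i ^ m i).saturation (P i).primeCompl
  have hIP (i : ι) : I ≤ P i :=
    (hD₀.le_of_mem (mem_univ i)).trans (hD₀.radical_eq i (mem_univ i) ▸ Ideal.le_radical)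
  have hrad (i : ι) : (I ⊔ P i ^ m i).radical = P i :=
    Ideal.radical_sup_pow_eq (hIP i) (hm_pos i).ne'
  have hQprimary (i : ι) : (Q i).IsPrimary := Ideal.isPrimary_saturation_primeCompl (hrad i)
  have hQrad (i : ι) : (Q i).radical = P i := Ideal.radical_saturation_primeCompl (hrad i)
  have hIQ (i : ι) : I ≤ Q i := le_sup_left.trans Ideal.le_saturation
  have hQ_le {D} (hD : IsPrimaryDecompositionWithRadicals I P univ D) (i : ι)
      (hDi : P i ^ m i ≤ D i) : Q i ≤ D i :=
    Ideal.saturation_primeCompl_le_of_isPrimary (hD.isPrimary i (mem_univ i))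
      (sup_le (hD.le_of_mem (mem_univ i)) hDi) (hD.radical_eq i (mem_univ i))
  have hQ : IsPrimaryDecompositionWithRadicals I P univ Q := by
    refine ⟨fun i _ => hQprimary i, fun i _ => hQrad i,
      inf_eq_of_forall_exists_component hP ⟨D₀, hD₀⟩ fun i _ => ?_⟩
    obtain ⟨D, hD, hDi⟩ := hm_mem i
    refine ⟨Function.update D i (Q i), hD.update (hQprimary i) (hQrad i) (hIQ i)
      (hQ_le hD i (hDi ▸ hD.pow_nilIndex_le (mem_univ i))), Function.update_self ..⟩
  have hQnil (i : ι) : nilIndex (Q i) = m i :=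
    le_antisymm (nilIndex_le (hm_pos i) (hQrad i ▸ le_sup_right.trans Ideal.le_saturation))
      (hm_le hQ i)
  refine ⟨Q, hQ, fun D hD i => ⟨hQnil i ▸ hm_le hD i, fun h => hQ_le hD i ?_⟩⟩
  exact hQnil i ▸ h ▸ hD.pow_nilIndex_le (mem_univ i)

end IsPrimaryDecompositionWithRadicals

end PrimaryDecomposition

section AssociatedPrimes

variable {R ι : Type*} [CommRing R]

theorem Ideal.exists_eq_radical_of_mem_associatedPrimes {s : Finset ι} {D : ι → Ideal R}
    (hD : ∀ i ∈ s, (D i).IsPrimary) {p : Ideal R} (hp : p ∈ (s.inf D).associatedPrimes) :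
    ∃ i ∈ s, p = (D i).radical := by
  obtain ⟨hprime, x, hx⟩ := hp
  rw [Submodule.colon_finsetInf, ← Ideal.radicalInfTopHom_apply, map_finset_inf] at hx
  obtain ⟨i, hi, hle⟩ := hprime.inf_le'.mp hx.ge
  have hpi : p = ((D i).colon {x}).radical := le_antisymm (hx ▸ Finset.inf_le hi) hle
  have hxi : x ∉ D i := fun hxi => hprime.ne_top <| by
    rwa [(Submodule.colon_eq_top_iff_subset _).mpr (Set.singleton_subset_iff.mpr hxi),
      Ideal.radical_top] at hpi
  refine ⟨i, hi, ?_⟩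
  rw [hpi, (hD i hi).radical_colon_singleton_of_notMem hxi, Submodule.colon_univ]

theorem exists_isPrimaryDecompositionWithRadicals_associatedPrimes [IsNoetherianRing R]
    (I : Ideal R) : ∃ (r : ℕ) (P : Fin r → Ideal R), P.Injective ∧
      (∀ i, P i ∈ I.associatedPrimes) ∧ ∃ D, IsPrimaryDecompositionWithRadicals I P univ D := by
  obtain ⟨t, ht⟩ :=
    Submodule.IsLasker.exists_isMinimalPrimaryDecomposition (Submodule.isLasker R R) I
  let e := t.equivFin
  let D (i : Fin t.card) : Ideal R := e.symm i
  refine ⟨t.card, fun i => (D i).radical, fun i j hij => ?_, fun i => ?_, D,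
    fun i _ => ht.primary (e.symm i).2, fun _ _ => rfl, ?_⟩
  · exact e.symm.injective <| Subtype.ext <|
      Submodule.IsMinimalPrimaryDecomposition.injOn _ _ ht (e.symm i).2 (e.symm j).2
        (by simpa using hij)
  · simpa using ht.mem_associatedPrimes (e.symm i).2
  · rw [← ht.inf_eq, inf_univ_eq_iInf, e.symm.iInf_comp (g := fun J : t => (J : Ideal R)),
      Finset.inf_eq_iInf, iInf_subtype']
    rfl

end AssociatedPrimes

section FinIndexed

variable {R : Type*} [CommRing R] {I : Ideal R} {r : ℕ} {P Q Q' : Fin r → Ideal R}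

theorem IsIrredundantPrimaryDecomposition.isPrimaryDecompositionWithRadicals
    (hQ : IsIrredundantPrimaryDecomposition I Q) (hP : ∀ i, (Q i).radical = P i) :
    IsPrimaryDecompositionWithRadicals I P univ Q :=
  ⟨fun i _ => hQ.1 i, fun i _ => hP i, by rw [inf_univ_eq_iInf, hQ.2.1]⟩

theorem IsPrimaryDecompositionWithRadicals.isIrredundantPrimaryDecomposition
    (hQ : IsPrimaryDecompositionWithRadicals I P univ Q) (hP : P.Injective)
    (hass : ∀ i, P i ∈ I.associatedPrimes) : IsIrredundantPrimaryDecomposition I Q := by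
  classical
  refine ⟨fun i => hQ.isPrimary i (mem_univ i), by rw [← hQ.inf_eq, inf_univ_eq_iInf],
    fun i j h => hP ?_, fun i hle => ?_⟩
  · rw [← hQ.radical_eq i (mem_univ i), ← hQ.radical_eq j (mem_univ j), h]
  have hrest : (univ.erase i).inf Q = I := by
    refine le_antisymm ?_ (hQ.inf_eq ▸ Finset.inf_mono (erase_subset i univ))
    rw [← hQ.inf_eq, Finset.inf_eq_inf_inf_erase _ (mem_univ i)]
    refine le_inf (le_trans (le_iInf₂ fun j hj => Finset.inf_le ?_) hle) le_rfl
    simpa using hj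
  obtain ⟨j, hj, hPj⟩ := Ideal.exists_eq_radical_of_mem_associatedPrimes
    (fun j _ => hQ.isPrimary j (mem_univ j)) (hrest ▸ hass i)
  exact (ne_of_mem_erase hj) (hP (hPj.trans (hQ.radical_eq j (mem_univ j)))).symm

theorem IsMinimalPrimaryDecomposition.unique (hQ : IsMinimalPrimaryDecomposition I Q)
    (hQ' : IsMinimalPrimaryDecomposition I Q') (hrad : ∀ i, (Q i).radical = (Q' i).radical) :
    Q' = Q := by
  funext i
  have h := hQ.2 Q' hQ'.1 hrad i
  have h' := hQ'.2 Q hQ.1 (fun j => (hrad j).symm) i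
  have hnil := le_antisymm h.1 h'.1
  exact le_antisymm (h'.2 hnil.symm) (h.2 hnil)

end FinIndexed

theorem exists_unique_minimal_primary_decomposition_general
    {R : Type*} [CommRing R] [IsNoetherianRing R] (I : Ideal R) :
    ∃ (r : ℕ) (Q : Fin r → Ideal R),
      IsMinimalPrimaryDecomposition I Q ∧
        ∀ Q' : Fin r → Ideal R, IsMinimalPrimaryDecomposition I Q' →
          (∀ i, (Q i).radical = (Q' i).radical) → Q' = Q := by
  obtain ⟨r, P, hP, hass, hex⟩ := exists_isPrimaryDecompositionWithRadicals_associatedPrimes I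
  obtain ⟨Q, hQ, hQle⟩ :=
    IsPrimaryDecompositionWithRadicals.exists_forall_nilIndex_le hP hex
  have hQmin : IsMinimalPrimaryDecomposition I Q := by
    refine ⟨hQ.isIrredundantPrimaryDecomposition hP hass, fun Q' hQ' hrad => hQle Q' ?_⟩
    exact hQ'.isPrimaryDecompositionWithRadicals fun i =>
      (hrad i).symm.trans (hQ.radical_eq i (mem_univ i))
  exact ⟨r, Q, hQmin, fun Q' hQ' hrad => hQmin.unique hQ' hrad⟩

/-- **Ortiz's theorem.** Every proper ideal of a commutative Noetherian ring admits an
irredundant primary decomposition that is componentwise minimal (first for the nilpotency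
index `nil`, then for inclusion) among all irredundant primary decompositions with the
same radicals; moreover such a decomposition is unique. -/
theorem exists_unique_minimal_primary_decomposition
    {R : Type*} [CommRing R] [IsNoetherianRing R] (I : Ideal R) (hI : I ≠ ⊤) :
    ∃ (r : ℕ) (Q : Fin r → Ideal R),
      IsMinimalPrimaryDecomposition I Q ∧
        ∀ Q' : Fin r → Ideal R, IsMinimalPrimaryDecomposition I Q' →
          (∀ i, (Q i).radical = (Q' i).radical) → Q' = Q :=
  exists_unique_minimal_primary_decomposition_general I
end

section
/- Let K be a field of characteristic 0, R = K[x_1,…,x_n], and p ⊆ R a prime ideal. Let T be a subset of the variable index set {1,…,n} such that the images of the variables x_i (i ∈ T) in the integral domain R/p are algebraically independent over K, and R/p is algebraic over the K-subalgebra generated by these images. Let S ⊆ R be the multiplicative set consisting of nonzero polynomials involving only the variables x_i with i ∈ T. Then S ∩ p = ∅, and the extension p·S⁻¹R of p to the localization S⁻¹R is a maximal ideal of S⁻¹R. -/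
set_option synthInstance.maxHeartbeats 1000000
set_option maxHeartbeats 1000000

open MvPolynomial

/-- The multiplicative set `S` of nonzero polynomials involving only the variables
`x_i` with `i ∈ T`. -/
noncomputable def freeVarsSubmonoid (K : Type*) [Field K] {n : ℕ} (T : Set (Fin n)) :
    Submonoid (MvPolynomial (Fin n) K) where
  carrier := {f | f ∈ MvPolynomial.supported K T ∧ f ≠ 0}
  one_mem' := ⟨Subalgebra.one_mem _, one_ne_zero⟩
  mul_mem' := fun ha hb => ⟨Subalgebra.mul_mem _ ha.1 hb.1, mul_ne_zero ha.2 hb.2⟩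

/-!
The images `y_i` of the `x_i`, `i ∈ T`, generate a polynomial ring `A = K[y_i]` inside `R ⧸ p`,
and `S` maps onto `A ∖ {0}`; in particular `S ∩ p = ∅`. Since `R ⧸ p` is algebraic over `A`,
every nonzero `r̄ ∈ R ⧸ p` divides some nonzero `ā ∈ A`, i.e. the image of an element of `S`.
Hence every prime strictly containing `p` meets `S`, so `p S⁻¹R` is maximal among the primes of
`S⁻¹R`, hence maximal.
-/

theorem IsLocalization.isMaximal_map_of_forall_dvd {R : Type*} [CommRing R] (M : Submonoid R)
    (L : Type*) [CommRing L] [Algebra R L] [IsLocalization M L] {p : Ideal R} [p.IsPrime]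
    (hM : Disjoint (M : Set R) p)
    (hdvd : ∀ r ∉ p, ∃ s ∈ M, Ideal.Quotient.mk p r ∣ Ideal.Quotient.mk p s) :
    (p.map (algebraMap R L)).IsMaximal := by
  have hprime := isPrime_of_isPrime_disjoint M L p ‹_› hM
  obtain ⟨Q, hQ, hpQ⟩ := Ideal.exists_le_maximal _ hprime.ne_top
  have hp_le : p ≤ Q.under R := Ideal.map_le_iff_le_comap.mp hpQ
  suffices Q.under R = p by rwa [← map_under M L Q, this] at hQ
  refine le_antisymm (fun r hrQ => ?_) hp_le
  by_contra hrp
  obtain ⟨s, hsM, t, hst⟩ := hdvd r hrp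
  obtain ⟨t, rfl⟩ := Ideal.Quotient.mk_surjective t
  rw [← map_mul, Ideal.Quotient.eq] at hst
  have hsQ : s ∈ Q.under R := by
    simpa using Ideal.add_mem _ (hp_le hst) (Ideal.mul_mem_right t _ hrQ)
  exact Set.disjoint_left.mp ((disjoint_under_iff M L Q).mpr hQ.ne_top) hsM hsQ

theorem MvPolynomial.quotientMk_rename {R σ τ : Type*} [CommRing R]
    (I : Ideal (MvPolynomial σ R)) (f : τ → σ) (q : MvPolynomial τ R) :
    Ideal.Quotient.mk I (rename f q) = aeval (fun i => Ideal.Quotient.mk I (X (f i))) q := by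
  have : (Ideal.Quotient.mkₐ R I).comp (rename f) = aeval fun i => Ideal.Quotient.mk I (X (f i)) :=
    algHom_ext fun i => by simp
  exact DFunLike.congr_fun this q

section freeVarsSubmonoid

variable {K : Type*} [Field K] {n : ℕ} {T : Set (Fin n)}

theorem mem_freeVarsSubmonoid_iff {s : MvPolynomial (Fin n) K} :
    s ∈ freeVarsSubmonoid K T ↔ ∃ q : MvPolynomial T K, q ≠ 0 ∧ rename Subtype.val q = s := by
  change s ∈ supported K T ∧ s ≠ 0 ↔ _
  rw [supported_eq_range_rename]
  constructor
  · rintro ⟨⟨q, rfl⟩, hs⟩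
    exact ⟨q, fun hq => hs (by rw [hq, map_zero]), rfl⟩
  · rintro ⟨q, hq, rfl⟩
    exact ⟨⟨q, rfl⟩, (map_ne_zero_iff _ (rename_injective _ Subtype.val_injective)).mpr hq⟩

theorem notMem_of_mem_freeVarsSubmonoid (p : Ideal (MvPolynomial (Fin n) K))
    (hind : AlgebraicIndependent K fun i : T => Ideal.Quotient.mk p (X (i : Fin n))) :
    ∀ s ∈ freeVarsSubmonoid K T, s ∉ p := by
  intro s hs
  obtain ⟨q, hq, rfl⟩ := mem_freeVarsSubmonoid_iff.mp hs
  rw [← Ideal.Quotient.eq_zero_iff_mem, quotientMk_rename]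
  exact fun h => hq (algebraicIndependent_iff_injective_aeval.mp hind (h.trans (map_zero _).symm))

theorem exists_mem_freeVarsSubmonoid_quotientMk_dvd (p : Ideal (MvPolynomial (Fin n) K))
    [p.IsPrime]
    (halg : Algebra.IsAlgebraic
      ↥(Algebra.adjoin K (Set.range fun i : T => Ideal.Quotient.mk p (X (i : Fin n))))
      (MvPolynomial (Fin n) K ⧸ p))
    {r : MvPolynomial (Fin n) K} (hr : r ∉ p) :
    ∃ s ∈ freeVarsSubmonoid K T, Ideal.Quotient.mk p r ∣ Ideal.Quotient.mk p s := by
  have hr0 : Ideal.Quotient.mk p r ≠ 0 := by rwa [Ne, Ideal.Quotient.eq_zero_iff_mem]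
  obtain ⟨a, ha0, hdvd⟩ :=
    (halg.isAlgebraic _).exists_nonzero_dvd (mem_nonZeroDivisors_of_ne_zero hr0)
  obtain ⟨q, hq⟩ := (aeval (R := K) fun i : T => Ideal.Quotient.mk p (X (i : Fin n))).mem_range.mp
    (by rw [← Algebra.adjoin_range_eq_range_aeval]; exact a.2)
  refine ⟨rename Subtype.val q, mem_freeVarsSubmonoid_iff.mpr ⟨q, ?_, rfl⟩, ?_⟩
  · rintro rfl
    exact ha0 (Subtype.ext (by simpa using hq.symm))
  · rwa [quotientMk_rename, hq]

end freeVarsSubmonoid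

theorem extension_to_localization_at_free_variables_isMaximal_general
    {K : Type*} [Field K] {n : ℕ}
    (p : Ideal (MvPolynomial (Fin n) K)) [p.IsPrime] (T : Set (Fin n))
    (hind : AlgebraicIndependent K
      fun i : T => Ideal.Quotient.mk p (X (i : Fin n)))
    (halg : Algebra.IsAlgebraic
      ↥(Algebra.adjoin K (Set.range fun i : T => Ideal.Quotient.mk p (X (i : Fin n))))
      (MvPolynomial (Fin n) K ⧸ p)) :
    (∀ s ∈ freeVarsSubmonoid K T, s ∉ p) ∧
      (Ideal.map (algebraMap (MvPolynomial (Fin n) K)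
          (Localization (freeVarsSubmonoid K T))) p).IsMaximal := by
  have hdisj := notMem_of_mem_freeVarsSubmonoid p hind
  exact ⟨hdisj, IsLocalization.isMaximal_map_of_forall_dvd _ _ (Set.disjoint_left.mpr hdisj)
    fun r hr => exists_mem_freeVarsSubmonoid_quotientMk_dvd p halg hr⟩

/-- If `T` is a set of variable indices whose images in `R ⧸ p` are algebraically
independent over `K` and such that `R ⧸ p` is algebraic over the subalgebra they
generate, then the multiplicative set `S` of nonzero polynomials in the variables `x_i`
(`i ∈ T`) is disjoint from `p`, and the extension of `p` to the localization `S⁻¹R` is a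
maximal ideal. -/
theorem extension_to_localization_at_free_variables_isMaximal
    {K : Type*} [Field K] [CharZero K] {n : ℕ}
    (p : Ideal (MvPolynomial (Fin n) K)) [p.IsPrime] (T : Set (Fin n))
    (hind : AlgebraicIndependent K
      fun i : T => Ideal.Quotient.mk p (X (i : Fin n)))
    (halg : Algebra.IsAlgebraic
      ↥(Algebra.adjoin K (Set.range fun i : T => Ideal.Quotient.mk p (X (i : Fin n))))
      (MvPolynomial (Fin n) K ⧸ p)) :
    (∀ s ∈ freeVarsSubmonoid K T, s ∉ p) ∧
      (Ideal.map (algebraMap (MvPolynomial (Fin n) K)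
          (Localization (freeVarsSubmonoid K T))) p).IsMaximal :=
  extension_to_localization_at_free_variables_isMaximal_general p T hind halg
end
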